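/- arXiv:1412.0024 — 5 statements merged into one kernel-verified Lean document; each statement's English description precedes it below -/
import Mathlib

section
/- Let I be a nonzero ideal of O_K. If there exists a rational integer n with n − θ ∈ I, then I is not divisible by two distinct prime ideals of the same absolute norm; moreover P₂² does not divide I and P₃² does not divide I, where P₂ and P₃ are the unique prime ideals of O_K lying above 2 and 3 respectively. -/
/-!
Two primes `P`, `Q` containing `n - θ` with the same norm lie over the same rational prime `p`.
If `p ∤ 108 = -disc ℤ[θ]`, then `108 • 𝓞 K ⊆ ℤ[θ]` and `θ ≡ n` modulo `P ⊓ Q`, so every element of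
`𝓞 K` is congruent to a rational integer modulo `P ⊓ Q`, and this forces `P = Q`. Above `2` and `3`
the only primes are `(θ)` and `(θ + 1)`, of norms `2` and `3`; since `N(n - θ) = n³ - 2` is never
divisible by `4` or `9`, their squares cannot divide `I`.
-/

open Polynomial NumberField Ideal

theorem Rat.pow_three_ne_two (b : ℚ) : b ^ 3 ≠ 2 := by
  intro h
  have h2 : padicValRat 2 (2 : ℚ) = 1 := by exact_mod_cast padicValRat.self (p := 2) one_lt_two
  have := congrArg (padicValRat 2) h
  rw [padicValRat.pow, h2] at this
  omega

theorem Int.not_four_dvd_pow_three_sub_two (n : ℤ) : ¬ (4 : ℤ) ∣ n ^ 3 - 2 := by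
  have key : ∀ x : ZMod 4, x ^ 3 - 2 ≠ 0 := by decide
  rw [show (4 : ℤ) = ((4 : ℕ) : ℤ) from rfl, ← ZMod.intCast_zmod_eq_zero_iff_dvd]
  simpa using key n
theorem Int.not_nine_dvd_pow_three_sub_two (n : ℤ) : ¬ (9 : ℤ) ∣ n ^ 3 - 2 := by
  have key : ∀ x : ZMod 9, x ^ 3 - 2 ≠ 0 := by decide
  rw [show (9 : ℤ) = ((9 : ℕ) : ℤ) from rfl, ← ZMod.intCast_zmod_eq_zero_iff_dvd]
  simpa using key n

theorem PowerBasis.norm_algebraMap_sub_gen {R S : Type*} [CommRing R] [CommRing S] [Algebra R S]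
    (pb : PowerBasis R S) (r : R) :
    Algebra.norm R (algebraMap R S r - pb.gen) = (minpoly R pb.gen).eval r := by
  rw [Algebra.norm_eq_matrix_det pb.basis, map_sub, AlgHom.commutes, ← charpoly_leftMulMatrix,
    Matrix.eval_charpoly, Matrix.algebraMap_eq_diagonal]
  rfl

theorem Algebra.exists_sub_algebraMap_mem_of_mem_adjoin {R S : Type*} [CommRing R] [CommRing S]
    [Algebra R S] {J : Ideal S} {x : S} {r : R} (hx : x - algebraMap R S r ∈ J) {z : S}
    (hz : z ∈ Algebra.adjoin R {x}) : ∃ c : R, z - algebraMap R S c ∈ J := by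
  have hbot : Algebra.adjoin R {x} ≤
      (⊥ : Subalgebra R (S ⧸ J)).comap (Ideal.Quotient.mkₐ R J) := by
    rw [Algebra.adjoin_le_iff, Set.singleton_subset_iff]
    exact Algebra.mem_bot.2 ⟨r, (Ideal.Quotient.eq.2 hx).symm⟩
  obtain ⟨c, hc⟩ := Algebra.mem_bot.1 (hbot hz)
  exact ⟨c, Ideal.Quotient.eq.1 (by simpa using hc.symm)⟩

theorem Ideal.le_of_forall_exists_intCast_sub_mem {S : Type*} [CommRing S] {J P Q : Ideal S}
    (hP : P.IsPrime) (hJP : J ≤ P) (hJQ : J ≤ Q) {p : ℤ} (hp : Prime p) (hpJ : (p : S) ∈ J)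
    (h : ∀ x : S, ∃ c : ℤ, x - c ∈ J) : P ≤ Q := by
  intro x hx
  obtain ⟨c, hc⟩ := h x
  have hcP : (c : S) ∈ P := by simpa using sub_mem hx (hJP hc)
  have hpc : p ∣ c := by
    by_contra hpc
    obtain ⟨u, v, huv⟩ := hp.coprime_iff_not_dvd.2 hpc
    have h1 : ((u * p + v * c : ℤ) : S) ∈ P := by
      push_cast
      exact add_mem (P.mul_mem_left _ (hJP hpJ)) (P.mul_mem_left _ hcP)
    rw [huv, Int.cast_one] at h1
    exact hP.ne_top ((eq_top_iff_one P).2 h1)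
  obtain ⟨k, rfl⟩ := hpc
  have hcQ : ((p * k : ℤ) : S) ∈ Q := by
    push_cast
    exact Q.mul_mem_right _ (hJQ hpJ)
  simpa using add_mem (hJQ hc) hcQ

theorem Ideal.isPrimePow_absNorm {S : Type*} [CommRing S] [IsDedekindDomain S]
    [Module.Free ℤ S] [Module.Finite ℤ S] {P : Ideal S} (hP : P.IsPrime) (hP0 : P ≠ ⊥) :
    IsPrimePow (absNorm P) := by
  have := hP.isMaximal hP0
  let := Ideal.Quotient.field P
  have := P.finiteQuotientOfFreeOfNeBot hP0
  let : Fintype (S ⧸ P) := Fintype.ofFinite _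
  rw [absNorm_apply, Submodule.cardQuot_apply, Nat.card_eq_fintype_card]
  exact FiniteField.isPrimePow_card _

theorem Ideal.eq_span_singleton_of_mem_of_absNorm_prime {S : Type*} [CommRing S]
    [IsDedekindDomain S] [Module.Free ℤ S] [Module.Finite ℤ S] {P : Ideal S} (hP : P.IsPrime)
    {s : S} (hs : s ∈ P) (hN : (absNorm (span {s})).Prime) : P = span {s} := by
  have hbot : span {s} ≠ ⊥ := absNorm_eq_zero_iff.not.1 hN.ne_zero
  have hmax := (isPrime_of_irreducible_absNorm hN.prime.irreducible).isMaximal hbot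
  exact (hmax.eq_of_le hP.ne_top (span_le.2 (Set.singleton_subset_iff.2 hs))).symm

namespace CubeRootTwo

variable {K : Type*} [Field K] [NumberField K] {θ : 𝓞 K}

theorem minpoly_eq_X_pow_three_sub_two (hθ : θ ^ 3 = 2) : minpoly ℚ (θ : K) = X ^ 3 - C 2 := by
  refine (minpoly.eq_of_irreducible_of_monic ?_ ?_ (monic_X_pow_sub_C _ three_ne_zero)).symm
  · exact X_pow_sub_C_irreducible_of_prime Nat.prime_three Rat.pow_three_ne_two
  · rw [map_sub, aeval_X_pow, aeval_C, RingOfIntegers.coe_eq_algebraMap, ← map_pow, hθ, map_ofNat,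
      map_ofNat, sub_self]

theorem norm_intCast_sub (hθ : θ ^ 3 = 2) (hgen : Algebra.adjoin ℚ {(θ : K)} = ⊤) (n : ℤ) :
    Algebra.norm ℤ ((n : 𝓞 K) - θ) = n ^ 3 - 2 := by
  have h := (PowerBasis.ofAdjoinEqTop (.of_finite ℚ (θ : K)) hgen).norm_algebraMap_sub_gen n
  rw [PowerBasis.ofAdjoinEqTop_gen, minpoly_eq_X_pow_three_sub_two hθ] at h
  apply Int.cast_injective (α := ℚ)
  rw [Algebra.coe_norm_int]
  simpa using h

theorem intCast_sub_ne_zero (hθ : θ ^ 3 = 2) (hgen : Algebra.adjoin ℚ {(θ : K)} = ⊤) (n : ℤ) :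
    (n : 𝓞 K) - θ ≠ 0 := by
  intro h
  have h2 := norm_intCast_sub hθ hgen n
  rw [h, Algebra.norm_zero, eq_comm, sub_eq_zero] at h2
  exact Rat.pow_three_ne_two n (by exact_mod_cast h2)

theorem absNorm_span_intCast_sub (hθ : θ ^ 3 = 2) (hgen : Algebra.adjoin ℚ {(θ : K)} = ⊤)
    (n : ℤ) : absNorm (span {(n : 𝓞 K) - θ}) = (n ^ 3 - 2).natAbs := by
  rw [absNorm_span_singleton, norm_intCast_sub hθ hgen]

theorem absNorm_span_self (hθ : θ ^ 3 = 2) (hgen : Algebra.adjoin ℚ {(θ : K)} = ⊤) :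
    absNorm (span {θ}) = 2 := by
  simpa [span_singleton_neg] using absNorm_span_intCast_sub hθ hgen 0

theorem absNorm_span_add_one (hθ : θ ^ 3 = 2) (hgen : Algebra.adjoin ℚ {(θ : K)} = ⊤) :
    absNorm (span {θ + 1}) = 3 := by
  have h := absNorm_span_intCast_sub hθ hgen (-1)
  rwa [show ((-1 : ℤ) : 𝓞 K) - θ = -(θ + 1) by push_cast; ring, span_singleton_neg] at h

theorem eq_span_of_two_mem (hθ : θ ^ 3 = 2) (hgen : Algebra.adjoin ℚ {(θ : K)} = ⊤)
    {P : Ideal (𝓞 K)} (hP : P.IsPrime) (h2 : (2 : 𝓞 K) ∈ P) : P = span {θ} := by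
  refine eq_span_singleton_of_mem_of_absNorm_prime hP (hP.mem_of_pow_mem 3 ?_) ?_
  · rwa [hθ]
  · rw [absNorm_span_self hθ hgen]
    exact Nat.prime_two

theorem eq_span_of_three_mem (hθ : θ ^ 3 = 2) (hgen : Algebra.adjoin ℚ {(θ : K)} = ⊤)
    {P : Ideal (𝓞 K)} (hP : P.IsPrime) (h3 : (3 : 𝓞 K) ∈ P) : P = span {θ + 1} := by
  refine eq_span_singleton_of_mem_of_absNorm_prime hP (hP.mem_of_pow_mem 3 ?_) ?_
  · rw [show (θ + 1) ^ 3 = 3 * (1 + θ + θ ^ 2) by linear_combination hθ]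
    exact P.mul_mem_right _ h3
  · rw [absNorm_span_add_one hθ hgen]
    exact Nat.prime_three

theorem discr_eq_neg_108 (hθ : θ ^ 3 = 2) (hgen : Algebra.adjoin ℚ {(θ : K)} = ⊤) :
    Algebra.discr ℚ (PowerBasis.ofAdjoinEqTop (.of_finite ℚ (θ : K)) hgen).basis = -108 := by
  set pb := PowerBasis.ofAdjoinEqTop (.of_finite ℚ (θ : K)) hgen
  have hdim : pb.dim = 3 := by
    rw [PowerBasis.ofAdjoinEqTop_dim, minpoly_eq_X_pow_three_sub_two hθ, natDegree_X_pow_sub_C]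
  have hfin : Module.finrank ℚ K = 3 := pb.finrank.trans hdim
  have hnorm : Algebra.norm ℚ (θ : K) = 2 := by
    rw [← PowerBasis.ofAdjoinEqTop_gen (.of_finite ℚ (θ : K)) hgen,
      Algebra.PowerBasis.norm_gen_eq_coeff_zero_minpoly, hdim, PowerBasis.ofAdjoinEqTop_gen,
      minpoly_eq_X_pow_three_sub_two hθ]
    norm_num
  have hder : aeval (θ : K) (derivative (X ^ 3 - C 2 : ℚ[X])) =
      algebraMap ℚ K 3 * (θ : K) ^ 2 := by
    simp
    norm_num
  rw [Algebra.discr_powerBasis_eq_norm, hfin, PowerBasis.ofAdjoinEqTop_gen,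
    minpoly_eq_X_pow_three_sub_two hθ, hder, map_mul, map_pow, Algebra.norm_algebraMap, hfin,
    hnorm]
  norm_num

theorem discr_mul_mem_adjoin (hθ : θ ^ 3 = 2) (hgen : Algebra.adjoin ℚ {(θ : K)} = ⊤)
    (x : 𝓞 K) : 108 * x ∈ Algebra.adjoin ℤ {θ} := by
  have h := Algebra.discr_mul_isIntegral_mem_adjoin ℚ
    (B := PowerBasis.ofAdjoinEqTop (.of_finite ℚ (θ : K)) hgen) θ.isIntegral_coe x.isIntegral_coe
  rw [discr_eq_neg_108 hθ hgen, PowerBasis.ofAdjoinEqTop_gen, neg_smul, neg_mem_iff] at h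
  have hmap : (Algebra.adjoin ℤ {θ}).map (IsScalarTower.toAlgHom ℤ (𝓞 K) K) =
      Algebra.adjoin ℤ {(θ : K)} := by
    rw [AlgHom.map_adjoin, Set.image_singleton]
    rfl
  rw [← hmap] at h
  obtain ⟨y, hy, hyx⟩ := Subalgebra.mem_map.1 h
  convert hy
  apply RingOfIntegers.coe_injective
  rw [map_mul, map_ofNat]
  simpa [Algebra.smul_def] using hyx.symm

theorem exists_intCast_sub_mem (hθ : θ ^ 3 = 2) (hgen : Algebra.adjoin ℚ {(θ : K)} = ⊤)
    {J : Ideal (𝓞 K)} {n : ℤ} (hn : (n : 𝓞 K) - θ ∈ J) {m : ℤ} (hm : (m : 𝓞 K) ∈ J)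
    (hcop : IsCoprime m 108) (x : 𝓞 K) : ∃ c : ℤ, x - c ∈ J := by
  have hθn : θ - algebraMap ℤ (𝓞 K) n ∈ J := by simpa using neg_mem hn
  obtain ⟨c, hc⟩ :=
    Algebra.exists_sub_algebraMap_mem_of_mem_adjoin hθn (discr_mul_mem_adjoin hθ hgen x)
  obtain ⟨a, b, hab⟩ := hcop
  have hab' : (a : 𝓞 K) * m + b * 108 = 1 := by
    exact_mod_cast congrArg (Int.cast : ℤ → 𝓞 K) hab
  refine ⟨b * c, ?_⟩
  rw [show x - ((b * c : ℤ) : 𝓞 K) = a * x * m + b * (108 * x - algebraMap ℤ (𝓞 K) c) by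
    simp only [eq_intCast]; push_cast; linear_combination x * hab'.symm]
  exact add_mem (J.mul_mem_left _ hm) (J.mul_mem_left _ hc)

theorem eq_of_absNorm_eq (hθ : θ ^ 3 = 2) (hgen : Algebra.adjoin ℚ {(θ : K)} = ⊤)
    {P Q : Ideal (𝓞 K)} (hP : P.IsPrime) (hQ : Q.IsPrime) {n : ℤ} (hnP : (n : 𝓞 K) - θ ∈ P)
    (hnQ : (n : 𝓞 K) - θ ∈ Q) (hPQ : absNorm P = absNorm Q) : P = Q := by
  have hP0 : P ≠ ⊥ := fun h ↦ intCast_sub_ne_zero hθ hgen n (by simpa [h] using hnP)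
  obtain ⟨p, k, hp, -, hpk⟩ := (isPrimePow_nat_iff _).1 (isPrimePow_absNorm hP hP0)
  have hpP : (p : 𝓞 K) ∈ P := hP.mem_of_pow_mem k (by exact_mod_cast hpk ▸ absNorm_mem P)
  have hpQ : (p : 𝓞 K) ∈ Q := hQ.mem_of_pow_mem k (by exact_mod_cast hpk ▸ hPQ ▸ absNorm_mem Q)
  by_cases h2 : p = 2
  · subst h2
    rw [eq_span_of_two_mem hθ hgen hP hpP, eq_span_of_two_mem hθ hgen hQ hpQ]
  by_cases h3 : p = 3
  · subst h3
    rw [eq_span_of_three_mem hθ hgen hP hpP, eq_span_of_three_mem hθ hgen hQ hpQ]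
  have hcop : IsCoprime (p : ℤ) 108 := by
    rw [show (108 : ℤ) = ((2 ^ 2 * 3 ^ 3 : ℕ) : ℤ) by norm_num, Nat.isCoprime_iff_coprime]
    exact .mul_right (((Nat.coprime_primes hp Nat.prime_two).2 h2).pow_right 2)
      (((Nat.coprime_primes hp Nat.prime_three).2 h3).pow_right 3)
  have hpPQ : ((p : ℤ) : 𝓞 K) ∈ P ⊓ Q := by
    rw [Int.cast_natCast]
    exact ⟨hpP, hpQ⟩
  have hcong := exists_intCast_sub_mem hθ hgen (J := P ⊓ Q) ⟨hnP, hnQ⟩ hpPQ hcop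
  have hpZ : Prime (p : ℤ) := Nat.prime_iff_prime_int.1 hp
  exact le_antisymm
    (le_of_forall_exists_intCast_sub_mem hP inf_le_left inf_le_right hpZ hpPQ hcong)
    (le_of_forall_exists_intCast_sub_mem hQ inf_le_right inf_le_left hpZ hpPQ hcong)

theorem sq_absNorm_dvd (hθ : θ ^ 3 = 2) (hgen : Algebra.adjoin ℚ {(θ : K)} = ⊤)
    {P I : Ideal (𝓞 K)} (hPI : P ^ 2 ∣ I) {n : ℤ} (hn : (n : 𝓞 K) - θ ∈ I) :
    (absNorm P : ℤ) ^ 2 ∣ n ^ 3 - 2 := by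
  have h := map_dvd absNorm (hPI.trans (dvd_span_singleton.2 hn))
  rw [map_pow, absNorm_span_intCast_sub hθ hgen] at h
  exact_mod_cast Int.natCast_dvd.2 h

end CubeRootTwo

theorem no_repeated_norms_and_no_ramified_squares_general
    (K : Type*) [Field K] [NumberField K]
    (θ : NumberField.RingOfIntegers K) (hθ : θ ^ 3 = 2)
    (hgen : Algebra.adjoin ℚ {(θ : K)} = ⊤)
    (I : Ideal (NumberField.RingOfIntegers K))
    (hsolv : ∃ n : ℤ, (n : NumberField.RingOfIntegers K) - θ ∈ I)
    (P₂ P₃ : Ideal (NumberField.RingOfIntegers K))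
    (hP₂ : P₂.IsPrime) (hP₂mem : (2 : NumberField.RingOfIntegers K) ∈ P₂)
    (hP₃ : P₃.IsPrime) (hP₃mem : (3 : NumberField.RingOfIntegers K) ∈ P₃) :
    (∀ P Q : Ideal (NumberField.RingOfIntegers K), P.IsPrime → Q.IsPrime →
        P ∣ I → Q ∣ I → Ideal.absNorm P = Ideal.absNorm Q → P = Q) ∧
      ¬ (P₂ ^ 2 ∣ I) ∧ ¬ (P₃ ^ 2 ∣ I) := by
  obtain ⟨n, hn⟩ := hsolv
  refine ⟨fun P Q hP hQ hPI hQI hPQ ↦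
    CubeRootTwo.eq_of_absNorm_eq hθ hgen hP hQ (le_of_dvd hPI hn) (le_of_dvd hQI hn) hPQ, ?_, ?_⟩
  · intro h
    have h4 := CubeRootTwo.sq_absNorm_dvd hθ hgen h hn
    rw [CubeRootTwo.eq_span_of_two_mem hθ hgen hP₂ hP₂mem,
      CubeRootTwo.absNorm_span_self hθ hgen] at h4
    exact Int.not_four_dvd_pow_three_sub_two n (by simpa using h4)
  · intro h
    have h9 := CubeRootTwo.sq_absNorm_dvd hθ hgen h hn
    rw [CubeRootTwo.eq_span_of_three_mem hθ hgen hP₃ hP₃mem,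
      CubeRootTwo.absNorm_span_add_one hθ hgen] at h9
    exact Int.not_nine_dvd_pow_three_sub_two n (by simpa using h9)

/-- Let `θ` be the (real) cube root of `2`, `K = ℚ(θ)`, and `O_K` its
ring of integers.  Let `I` be a nonzero ideal of `O_K` such that `n ≡ θ (mod I)` is
solvable with a rational integer `n`.  Then `I` is not divisible by two distinct prime
ideals of the same absolute norm; moreover `P₂² ∤ I` and `P₃² ∤ I`, where `P₂` and `P₃`
are the (unique) prime ideals above `2` and `3` respectively. -/
theorem no_repeated_norms_and_no_ramified_squares
    (K : Type*) [Field K] [NumberField K]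
    (θ : NumberField.RingOfIntegers K) (hθ : θ ^ 3 = 2)
    (hgen : Algebra.adjoin ℚ {(θ : K)} = ⊤)
    (I : Ideal (NumberField.RingOfIntegers K)) (hI : I ≠ ⊥)
    (hsolv : ∃ n : ℤ, (n : NumberField.RingOfIntegers K) - θ ∈ I)
    (P₂ P₃ : Ideal (NumberField.RingOfIntegers K))
    (hP₂ : P₂.IsPrime) (hP₂mem : (2 : NumberField.RingOfIntegers K) ∈ P₂)
    (hP₃ : P₃.IsPrime) (hP₃mem : (3 : NumberField.RingOfIntegers K) ∈ P₃) :
    (∀ P Q : Ideal (NumberField.RingOfIntegers K), P.IsPrime → Q.IsPrime →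
        P ∣ I → Q ∣ I → Ideal.absNorm P = Ideal.absNorm Q → P = Q) ∧
      ¬ (P₂ ^ 2 ∣ I) ∧ ¬ (P₃ ^ 2 ∣ I) :=
  no_repeated_norms_and_no_ramified_squares_general K θ hθ hgen I hsolv P₂ P₃ hP₂ hP₂mem hP₃ hP₃mem
end

section
/- Let I be a nonzero ideal of O_K such that there is exactly one residue class n modulo N(I) of rational integers with n − θ ∈ I. Then for every rational integer m, the element m lies in I if and only if N(I) divides m. -/
/-- Let `θ` be the (real) cube root of `2`, `K = ℚ(θ)`, and `O_K` its
ring of integers.  Let `I` be a nonzero ideal of `O_K` such that there is exactly one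
residue class `n` modulo `N(I)` of rational integers with `n − θ ∈ I` (i.e. `ρ(I) = 1`).
Then for every rational integer `m`, we have `m ∈ I` if and only if `N(I) ∣ m`. -/
theorem mem_iff_norm_dvd_of_rho_eq_one
    (K : Type*) [Field K] [NumberField K]
    (θ : NumberField.RingOfIntegers K) (hθ : θ ^ 3 = 2)
    (hgen : Algebra.adjoin ℚ {(θ : K)} = ⊤)
    (I : Ideal (NumberField.RingOfIntegers K)) (hI : I ≠ ⊥)
    (hρ : ∃! c : ZMod (Ideal.absNorm I), ∃ n : ℤ,
      (n : ZMod (Ideal.absNorm I)) = c ∧ (n : NumberField.RingOfIntegers K) - θ ∈ I) :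
    ∀ m : ℤ, (m : NumberField.RingOfIntegers K) ∈ I ↔ (Ideal.absNorm I : ℤ) ∣ m := by
  intro m
  obtain ⟨c, ⟨n₀, hc, hn₀⟩, huniq⟩ := hρ
  constructor
  · intro hm
    have h1 : ((n₀ + m : ℤ) : ZMod (Ideal.absNorm I)) = c := by
      apply huniq
      refine ⟨n₀ + m, rfl, ?_⟩
      have : ((n₀ + m : ℤ) : NumberField.RingOfIntegers K) - θ
          = ((n₀ : ℤ) : NumberField.RingOfIntegers K) - θ + (m : NumberField.RingOfIntegers K) := by
        push_cast; ring
      rw [this]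
      exact I.add_mem hn₀ hm
    have h2 : ((m : ℤ) : ZMod (Ideal.absNorm I)) = 0 := by
      have := h1.trans hc.symm
      push_cast at this ⊢
      linear_combination this
    exact (ZMod.intCast_zmod_eq_zero_iff_dvd m (Ideal.absNorm I)).mp h2
  · rintro ⟨k, rfl⟩
    push_cast
    exact I.mul_mem_right _ (Ideal.absNorm_mem I)
end

section
/- Let δ ∈ (0,1), let h ≥ 3 be an integer, set k = ⌊h/3⌋, and let X > 1 be real. If n is an integer with X < n ≤ 2X such that Ω_δ(n³+2) ≥ h, then there exist primes p₁ ≤ p₂ ≤ … ≤ p_k with X^δ ≤ p₁, such that the product d = p₁p₂⋯p_k divides n³+2, the inequality p₁p₂⋯p_{k−1}·p_k^(h−k+1) ≤ 9X³ holds, and d ≤ 9^(1/3)·X. -/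
open scoped Classical

/-- `Ω_δ(m)` (relative to `X`): the number of prime factors `p` of `m`, counted with
multiplicity, with `p ≥ X^δ`. -/
noncomputable def OmegaDelta (X δ : ℝ) (m : ℕ) : ℕ :=
  Multiset.card
    (Multiset.filter (fun p => X ^ δ ≤ (p : ℝ)) (m.primeFactorsList : Multiset ℕ))

/-!
Sort the prime factors `p ≥ X^δ` of `N = n³ + 2` increasingly as `p₁ ≤ p₂ ≤ ⋯` and take the
first `k` of them. Since there are at least `h` of them, `P = p₁⋯p_h` divides `N`, and
`N ≤ 9X³` because `n ≥ 3` (for `n ≤ 2`, `N` has fewer than three prime factors).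
Monotonicity gives `p₁⋯p_{k-1}·p_k^(h-k+1) ≤ P`, and comparing the blocks
`p₁⋯p_k ≤ p_{k+1}⋯p_{2k} ≤ p_{2k+1}⋯p_{3k}` gives `d³ ≤ P`.
-/

open Finset

/-- The multiset in `OmegaDelta` elaborates as the image of `m.primeFactorsList` in `Multiset ℝ`. -/
theorem omegaDelta_eq_card_filter (X δ : ℝ) (m : ℕ) :
    OmegaDelta X δ m =
      Multiset.card (Multiset.filter (fun p : ℕ => X ^ δ ≤ (p : ℝ)) m.primeFactorsList) := by
  simp [OmegaDelta, List.filter_map, Function.comp_def]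

theorem Multiset.exists_monotoneOn_map_Icc_le {α : Type*} [LinearOrder α] [Inhabited α]
    (s : Multiset α) {h : ℕ} (hh : h ≤ Multiset.card s) :
    ∃ p : ℕ → α, MonotoneOn p (Set.Icc 1 h) ∧ (Finset.Icc 1 h).val.map p ≤ s := by
  set l := s.sort (· ≤ ·)
  have hlen : h ≤ l.length := by rwa [Multiset.length_sort]
  refine ⟨fun i => l.getI (i - 1), fun i hi j hj hij => ?_, ?_⟩
  · simp only [Set.mem_Icc] at hi hj
    simp only [List.getI_eq_getElem _ (show i - 1 < l.length by omega),
      List.getI_eq_getElem _ (show j - 1 < l.length by omega)]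
    exact (Multiset.pairwise_sort s _).rel_get_of_le (by simp only [Fin.mk_le_mk]; omega)
  · have htake : (Finset.Icc 1 h).val.map (fun i => l.getI (i - 1)) = (l.take h : Multiset α) := by
      rw [Nat.Icc_eq_range', Multiset.map_coe, Multiset.coe_eq_coe]
      refine List.Perm.of_eq (List.ext_getElem ?_ fun i h₁ h₂ => ?_)
      · simp only [add_tsub_cancel_right, List.length_map, List.length_range', List.length_take]
        omega
      · simp only [List.length_take, lt_inf_iff] at h₂
        simp [List.getI_eq_getElem _ h₂.2]
    rw [htake, ← Multiset.sort_eq s (· ≤ ·)]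
    exact Multiset.coe_le.mpr (List.take_sublist h l).subperm

theorem Nat.Icc_one_eq_Ioc_zero (n : ℕ) : Icc 1 n = Ioc 0 n := Icc_add_one_left_eq_Ioc 0 n

section OrderedMonoid

variable {M : Type*} [CommMonoid M] [PartialOrder M] [IsOrderedMonoid M] {p : ℕ → M}

theorem prod_Icc_pred_mul_pow_le_prod_Icc {h k : ℕ} (hp : MonotoneOn p (Set.Icc 1 h))
    (hk : 1 ≤ k) (hkh : k ≤ h) :
    (∏ i ∈ Icc 1 (k - 1), p i) * p k ^ (h - k + 1) ≤ ∏ i ∈ Icc 1 h, p i := by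
  rw [Nat.Icc_one_eq_Ioc_zero, Nat.Icc_one_eq_Ioc_zero,
    ← prod_Ioc_consecutive p (Nat.zero_le (k - 1)) (by omega : k - 1 ≤ h)]
  gcongr
  convert pow_card_le_prod (Ioc (k - 1) h) p (p k) fun i hi => ?_ using 2
  · simp only [Nat.card_Ioc]; omega
  · rw [mem_Ioc] at hi
    exact hp ⟨hk, hkh⟩ ⟨by omega, hi.2⟩ (by omega)

theorem pow_prod_Icc_le_prod_Icc_mul {k : ℕ} :
    ∀ {m : ℕ}, MonotoneOn p (Set.Icc 1 (m * k)) →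
      (∏ i ∈ Icc 1 k, p i) ^ m ≤ ∏ i ∈ Icc 1 (m * k), p i
  | 0, _ => by simp
  | m + 1, hp => by
    have hshift : ∏ i ∈ Icc 1 k, p i ≤ ∏ i ∈ Ioc (m * k) (m * k + k), p i := by
      rw [show Ioc (m * k) (m * k + k) = (Ioc 0 k).map (addRightEmbedding (m * k)) by
        rw [map_add_right_Ioc, zero_add, add_comm], prod_map, Nat.Icc_one_eq_Ioc_zero]
      refine prod_le_prod' fun i hi => ?_
      rw [mem_Ioc] at hi
      simp only [addRightEmbedding_apply]
      exact hp ⟨hi.1, by nlinarith⟩ ⟨by omega, by rw [add_mul]; omega⟩ (by omega)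
    calc (∏ i ∈ Icc 1 k, p i) ^ (m + 1)
        = (∏ i ∈ Icc 1 k, p i) ^ m * ∏ i ∈ Icc 1 k, p i := pow_succ _ _
      _ ≤ (∏ i ∈ Icc 1 (m * k), p i) * ∏ i ∈ Ioc (m * k) (m * k + k), p i :=
          mul_le_mul' (pow_prod_Icc_le_prod_Icc_mul
            (hp.mono (Set.Icc_subset_Icc_right (by nlinarith)))) hshift
      _ = ∏ i ∈ Icc 1 ((m + 1) * k), p i := by
          rw [Nat.Icc_one_eq_Ioc_zero, Nat.Icc_one_eq_Ioc_zero,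
            prod_Ioc_consecutive _ (Nat.zero_le _) (by omega), add_mul, one_mul]

end OrderedMonoid

theorem Real.le_rpow_one_div_mul_of_pow_le {x y c : ℝ} {m : ℕ} (hm : m ≠ 0) (hc : 0 ≤ c)
    (hy : 0 ≤ y) (h : x ^ m ≤ c * y ^ m) : x ≤ c ^ ((1 : ℝ) / m) * y := by
  refine le_of_pow_le_pow_left₀ hm (by positivity) ?_
  rwa [mul_pow, ← Real.rpow_natCast (c ^ _), ← Real.rpow_mul hc, one_div_mul_cancel (by simpa),
    Real.rpow_one]

theorem cast_cube_add_two_le {n : ℕ} {X : ℝ} (hn : 3 ≤ n) (hnX : (n : ℝ) ≤ 2 * X) :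
    ((n ^ 3 + 2 : ℕ) : ℝ) ≤ 9 * X ^ 3 := by
  have h3 : (3 : ℝ) ≤ n := by exact_mod_cast hn
  have hcube : (n : ℝ) ^ 3 ≤ 8 * X ^ 3 := by
    nlinarith [pow_le_pow_left₀ (by positivity) hnX 3]
  push_cast
  nlinarith [pow_le_pow_left₀ (by norm_num) h3 3]

theorem three_le_of_three_le_length_primeFactorsList {n : ℕ}
    (h : 3 ≤ (n ^ 3 + 2).primeFactorsList.length) : 3 ≤ n := by
  by_contra! hn
  interval_cases n <;> simp_all

theorem exists_small_prime_product_general (δ : ℝ)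
    (h : ℕ) (hh : 3 ≤ h) (k : ℕ) (hk : k = h / 3)
    (X : ℝ) (n : ℕ) (hn2 : (n : ℝ) ≤ 2 * X)
    (hΩ : h ≤ OmegaDelta X δ (n ^ 3 + 2)) :
    ∃ p : ℕ → ℕ,
      (∀ i, 1 ≤ i → i ≤ k → (p i).Prime) ∧
      (∀ i j, 1 ≤ i → i ≤ j → j ≤ k → p i ≤ p j) ∧
      X ^ δ ≤ (p 1 : ℝ) ∧
      (∏ i ∈ Finset.Icc 1 k, p i) ∣ n ^ 3 + 2 ∧
      (∏ i ∈ Finset.Icc 1 (k - 1), (p i : ℝ)) * (p k : ℝ) ^ (h - k + 1) ≤ 9 * X ^ 3 ∧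
      ((∏ i ∈ Finset.Icc 1 k, p i : ℕ) : ℝ) ≤ 9 ^ ((1 : ℝ) / 3) * X := by
  rw [omegaDelta_eq_card_filter] at hΩ
  set S := Multiset.filter (fun p : ℕ => X ^ δ ≤ (p : ℝ)) (n ^ 3 + 2).primeFactorsList
  have hSN : S ≤ (n ^ 3 + 2).primeFactorsList := Multiset.filter_le _ _
  have hn : 3 ≤ n := three_le_of_three_le_length_primeFactorsList
    (hh.trans (hΩ.trans (by simpa using Multiset.card_le_card hSN)))
  obtain ⟨p, hmono, hpS⟩ := S.exists_monotoneOn_map_Icc_le hΩ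
  have hmem : ∀ i ∈ Icc 1 h, p i ∈ S := fun i hi =>
    Multiset.mem_of_le hpS (Multiset.mem_map_of_mem p hi)
  have hprime : ∀ i ∈ Icc 1 h, (p i).Prime := fun i hi =>
    Nat.prime_of_mem_primeFactorsList (Multiset.mem_filter.1 (hmem i hi)).1
  have hdvd : ∏ i ∈ Icc 1 h, p i ∣ n ^ 3 + 2 := by
    simpa [Nat.prod_primeFactorsList] using Multiset.prod_dvd_prod_of_le (hpS.trans hSN)
  have hP : ((∏ i ∈ Icc 1 h, p i : ℕ) : ℝ) ≤ 9 * X ^ 3 :=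
    (Nat.cast_le.2 (Nat.le_of_dvd (by positivity) hdvd)).trans (cast_cube_add_two_le hn hn2)
  refine ⟨p, fun i h₁ h₂ => hprime i (mem_Icc.2 ⟨h₁, by omega⟩),
    fun i j h₁ hij hj => hmono ⟨h₁, by omega⟩ ⟨by omega, by omega⟩ hij,
    (Multiset.mem_filter.1 (hmem 1 (mem_Icc.2 ⟨le_rfl, by omega⟩))).2,
    (prod_dvd_prod_of_subset _ _ _ (Icc_subset_Icc_right (by omega))).trans hdvd, ?_, ?_⟩
  · have hbound := prod_Icc_pred_mul_pow_le_prod_Icc hmono (by omega) (by omega : k ≤ h)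
    exact le_trans (by exact_mod_cast hbound) hP
  · have hcube : (∏ i ∈ Icc 1 k, p i) ^ 3 ≤ ∏ i ∈ Icc 1 h, p i :=
      (pow_prod_Icc_le_prod_Icc_mul (hmono.mono (Set.Icc_subset_Icc_right (by omega)))).trans
        (prod_le_prod_of_subset_of_one_le' (Icc_subset_Icc_right (by omega))
          fun i hi _ => (hprime i hi).one_lt.le)
    exact_mod_cast Real.le_rpow_one_div_mul_of_pow_le three_ne_zero (by norm_num)
      (by linarith) (le_trans (by exact_mod_cast hcube) hP)

/-- Let `δ ∈ (0,1)`, `h ≥ 3`, `k = ⌊h/3⌋`, and `X > 1`.  If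
`X < n ≤ 2X` and `Ω_δ(n³+2) ≥ h`, then there are primes `X^δ ≤ p₁ ≤ ⋯ ≤ p_k` whose
product `d = p₁⋯p_k` divides `n³+2`, with `p₁⋯p_{k−1}·p_k^(h−k+1) ≤ 9X³` and
`d ≤ 9^(1/3)·X`. -/
theorem exists_small_prime_product (δ : ℝ) (hδ0 : 0 < δ) (hδ1 : δ < 1)
    (h : ℕ) (hh : 3 ≤ h) (k : ℕ) (hk : k = h / 3)
    (X : ℝ) (hX : 1 < X) (n : ℕ) (hn1 : X < (n : ℝ)) (hn2 : (n : ℝ) ≤ 2 * X)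
    (hΩ : h ≤ OmegaDelta X δ (n ^ 3 + 2)) :
    ∃ p : ℕ → ℕ,
      (∀ i, 1 ≤ i → i ≤ k → (p i).Prime) ∧
      (∀ i j, 1 ≤ i → i ≤ j → j ≤ k → p i ≤ p j) ∧
      X ^ δ ≤ (p 1 : ℝ) ∧
      (∏ i ∈ Finset.Icc 1 k, p i) ∣ n ^ 3 + 2 ∧
      (∏ i ∈ Finset.Icc 1 (k - 1), (p i : ℝ)) * (p k : ℝ) ^ (h - k + 1) ≤ 9 * X ^ 3 ∧
      ((∏ i ∈ Finset.Icc 1 k, p i : ℕ) : ℝ) ≤ 9 ^ ((1 : ℝ) / 3) * X :=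
  exists_small_prime_product_general δ h hh k hk X n hn2 hΩ
end

section
/- There exist constants η > 0, C > 0, and an integer h₀ such that for every integer h ≥ h₀ and every real δ with exp(−ηh) ≤ δ and hδ ≤ 3, setting k = ⌊h/3⌋, one has (1/k!)·(log((3−(k−1)δ)/((h−k+1)δ)))^k ≤ C·2^(−h)/√h. -/
/-!
Write `k = ⌊h/3⌋`. Since `hδ ≤ 3`, the numerator `3 - (k-1)δ` lies in `[2, 3]` and the denominator
`(h-k+1)δ` in `[e^{-ηh}, 3]`, so the logarithm `L` satisfies `|L| ≤ log 3 + ηh`, which is linear in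
`h` with a slope `η` as small as we like. Stirling's bound `k! ≥ (k/e)^k` then gives
`L^k/k! ≤ (e|L|/k)^k ≤ 1000^{-k}`, and `1000^{-k}` decays like `10^{-h}`, much faster than
`2^{-h}/√h`.
-/

open Real

lemma abs_log_le_log_of_inv_le_of_le {x a : ℝ} (ha : 0 < a) (hax : a⁻¹ ≤ x) (hxa : x ≤ a) :
    |log x| ≤ log a := by
  have hx : 0 < x := (inv_pos.2 ha).trans_le hax
  refine abs_le.2 ⟨?_, log_le_log hx hxa⟩
  rw [neg_le, ← log_inv]
  exact log_le_log (inv_pos.2 hx) (inv_le_of_inv_le₀ ha hax)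

lemma abs_log_ratio_le {h k δ η : ℝ} (hη : 0 ≤ η) (hk : 1 ≤ k) (hkh : 3 * k ≤ h)
    (hδ : exp (-η * h) ≤ δ) (hhδ : h * δ ≤ 3) :
    |log ((3 - (k - 1) * δ) / ((h - k + 1) * δ))| ≤ log 3 + η * h := by
  have hδpos : 0 < δ := (exp_pos _).trans_le hδ
  have hnum_lo : 2 ≤ 3 - (k - 1) * δ := by nlinarith
  have hnum_hi : 3 - (k - 1) * δ ≤ 3 := by nlinarith
  have hden_lo : exp (-η * h) ≤ (h - k + 1) * δ := by nlinarith
  have hden_hi : (h - k + 1) * δ ≤ 3 := by nlinarith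
  have hden_pos : 0 < (h - k + 1) * δ := (exp_pos _).trans_le hden_lo
  have hexp : 1 ≤ exp (η * h) := one_le_exp (by nlinarith)
  rw [← log_exp (η * h), ← log_mul (by norm_num) (exp_pos _).ne']
  apply abs_log_le_log_of_inv_le_of_le (by positivity)
  · rw [le_div_iff₀ hden_pos, mul_inv, ← exp_neg, ← neg_mul]
    nlinarith [exp_pos (-η * h), inv_le_one_of_one_le₀ hexp]
  · rw [div_le_iff₀ hden_pos, mul_assoc]
    calc 3 - (k - 1) * δ ≤ 3 * (exp (η * h) * exp (-η * h)) := by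
          rw [← exp_add, neg_mul, add_neg_cancel, exp_zero]; linarith
      _ ≤ 3 * (exp (η * h) * ((h - k + 1) * δ)) := by gcongr

open Nat in
lemma pow_div_factorial_le_exp_one_mul_div_pow {x : ℝ} (hx : 0 ≤ x) (k : ℕ) :
    x ^ k / k ! ≤ (exp 1 * x / k) ^ k := by
  rcases k.eq_zero_or_pos with rfl | hk
  · simp
  have hkR : (0 : ℝ) < k := by exact_mod_cast hk
  have hstirling : (k : ℝ) ^ k / k ! ≤ exp 1 ^ k := by
    simpa [← exp_nat_mul] using Real.pow_div_factorial_le_exp _ hkR.le k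
  calc x ^ k / k ! = (x / k) ^ k * ((k : ℝ) ^ k / k !) := by
        rw [div_pow]; field_simp
    _ ≤ (x / k) ^ k * exp 1 ^ k := by gcongr
    _ = (exp 1 * x / k) ^ k := by rw [← mul_pow]; ring

lemma inv_ten_pow_le_two_rpow_neg_div_sqrt {h : ℕ} (hh : 0 < h) :
    (1 : ℝ) / 10 ^ h ≤ 2 ^ (-(h : ℝ)) / √h := by
  have hsqrt : √(h : ℝ) ≤ 5 ^ h := by
    rw [sqrt_le_left (by positivity)]
    calc (h : ℝ) ≤ 2 ^ h := by exact_mod_cast (Nat.lt_two_pow_self (n := h)).le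
      _ ≤ 25 ^ h := pow_le_pow_left₀ (by norm_num) (by norm_num) h
      _ = (5 ^ h) ^ 2 := by rw [← pow_mul, mul_comm, pow_mul]; norm_num
  rw [rpow_neg (by norm_num), rpow_natCast, div_le_div_iff₀ (by positivity)
    (sqrt_pos.2 (by exact_mod_cast hh)), show (10 : ℝ) ^ h = 2 ^ h * 5 ^ h by rw [← mul_pow]; norm_num]
  calc 1 * √(h : ℝ) ≤ 5 ^ h := by rw [one_mul]; exact hsqrt
    _ = (2 ^ h)⁻¹ * (2 ^ h * 5 ^ h) := by field_simp

/-- There are constants `η > 0`, `C > 0` and an integer `h₀` such that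
for every integer `h ≥ h₀` and every real `δ` with `exp(−ηh) ≤ δ` and `hδ ≤ 3`, setting
`k = ⌊h/3⌋`, one has `(1/k!)·(log((3−(k−1)δ)/((h−k+1)δ)))^k ≤ C·2^(−h)/√h`. -/
theorem first_estimate_beats_two_pow :
    ∃ η : ℝ, 0 < η ∧ ∃ C : ℝ, 0 < C ∧ ∃ h₀ : ℕ, ∀ h : ℕ, h₀ ≤ h →
      ∀ δ : ℝ, Real.exp (-η * h) ≤ δ → (h : ℝ) * δ ≤ 3 →
        (1 / ((h / 3).factorial : ℝ)) *
            (Real.log ((3 - ((h / 3 : ℕ) - 1 : ℝ) * δ) /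
              (((h : ℝ) - ((h / 3 : ℕ) : ℝ) + 1) * δ))) ^ (h / 3)
          ≤ C * 2 ^ (-(h : ℝ)) / Real.sqrt h := by
  refine ⟨1 / 25000, by norm_num, 1000, by norm_num, 100000, fun h hh δ hδ hhδ => ?_⟩
  set k := h / 3
  have hk : (33333 : ℝ) ≤ k := by exact_mod_cast (show 33333 ≤ k by omega)
  have hkh : 3 * (k : ℝ) ≤ h := by exact_mod_cast (show 3 * k ≤ h by omega)
  have hhk : (h : ℝ) ≤ 3 * k + 2 := by exact_mod_cast (show h ≤ 3 * k + 2 by omega)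
  set L := log ((3 - ((k : ℝ) - 1) * δ) / ((h - k + 1) * δ))
  have hL : |L| ≤ log 3 + 1 / 25000 * h :=
    abs_log_ratio_le (by norm_num) (by linarith) hkh hδ hhδ
  have hratio : exp 1 * |L| / k ≤ 1 / 1000 := by
    rw [div_le_div_iff₀ (by linarith) (by norm_num)]
    have hlog3 : log 3 ≤ 2 := by linarith [log_le_sub_one_of_pos (show (0 : ℝ) < 3 by norm_num)]
    have := mul_le_mul exp_one_lt_d9.le hL (abs_nonneg L) (by norm_num)
    linarith
  calc 1 / (k.factorial : ℝ) * L ^ k ≤ |L| ^ k / k.factorial := by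
        rw [one_div_mul_eq_div, ← abs_pow]; gcongr; exact le_abs_self _
    _ ≤ (exp 1 * |L| / k) ^ k := pow_div_factorial_le_exp_one_mul_div_pow (abs_nonneg L) k
    _ ≤ (1 / 1000) ^ k := by gcongr
    _ = 1000 * (1 / 10 ^ (3 * k + 3)) := by
        rw [pow_add, pow_mul, one_div_pow]; norm_num; field_simp
    _ ≤ 1000 * (1 / 10 ^ h) := by gcongr <;> [norm_num; omega]
    _ ≤ 1000 * (2 ^ (-(h : ℝ)) / √h) :=
        mul_le_mul_of_nonneg_left (inv_ten_pow_le_two_rpow_neg_div_sqrt (by omega)) (by norm_num)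
    _ = 1000 * 2 ^ (-(h : ℝ)) / √h := by rw [mul_div_assoc]
end

section
/- Let δ ∈ (0,1), let h ≥ 3 be an integer with hδ ≤ 3, and set k = ⌊h/3⌋. Let R(h,δ) = {(s₁,…,s_k) ∈ ℝ^k : δ ≤ s₁ ≤ s₂ ≤ … ≤ s_k and s₁ + … + s_{k−1} + (h−k+1)s_k ≤ 3}. Then ∫_{R(h,δ)} ds₁⋯ds_k/(s₁⋯s_k) ≤ (1/k!)·(log((3−(k−1)δ)/((h−k+1)δ)))^k. -/
/-!
Since `s₁, …, s_{k-1} ≥ δ`, the constraint forces `s_k ≤ M := (3 - (k-1)δ)/(h-k+1)`, so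
the region lies in the ordered part `{δ ≤ s₁ ≤ ⋯ ≤ s_k ≤ M}` of the box `[δ, M]^k`. Up to the
null set of non-injective tuples, the box is tiled by the `k!` images of the ordered part under
permutations of the coordinates; the integrand is symmetric, so the ordered part carries `1/k!`
of the box integral `(∫_δ^M dx/x)^k = log (M/δ)^k`.
-/

open MeasureTheory Function Set Real
open scoped Nat

section SortedTuples

variable {k : ℕ}

lemma Tuple.eq_sort_of_injective {α : Type*} [LinearOrder α] {f : Fin k → α} (hf : Injective f)
    {σ : Equiv.Perm (Fin k)} (h : Monotone (f ∘ σ)) : σ = Tuple.sort f :=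
  Tuple.eq_sort_iff.2 ⟨h, fun _ _ hij hfij => absurd (σ.injective (hf hfij)) hij.ne⟩

lemma volume_setOf_apply_eq_apply {i j : Fin k} (hij : i ≠ j) :
    volume {s : Fin k → ℝ | s i = s j} = 0 := by
  let L : (Fin k → ℝ) →ₗ[ℝ] ℝ :=
    (LinearMap.proj i : (Fin k → ℝ) →ₗ[ℝ] ℝ) - LinearMap.proj j
  have hL : {s : Fin k → ℝ | s i = s j} = (LinearMap.ker L : Set (Fin k → ℝ)) := by
    ext s; simp [L, sub_eq_zero]
  rw [hL]
  refine Measure.addHaar_submodule _ _ fun htop => ?_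
  have hsingle : (Pi.single i 1 : Fin k → ℝ) ∈ LinearMap.ker L := htop ▸ trivial
  simp [L, hij.symm] at hsingle

lemma ae_injective_pi_real : ∀ᵐ s : Fin k → ℝ, Injective s := by
  have hnull :
      volume (⋃ (i : Fin k) (j : Fin k) (_ : i ≠ j), {s : Fin k → ℝ | s i = s j}) = 0 :=
    measure_iUnion_null fun _ => measure_iUnion_null fun _ =>
      measure_iUnion_null volume_setOf_apply_eq_apply
  filter_upwards [measure_eq_zero_iff_ae_notMem.mp hnull] with s hs i j hij
  by_contra hne
  exact hs (mem_iUnion₂.2 ⟨i, j, mem_iUnion.2 ⟨hne, hij⟩⟩)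

lemma measurableSet_setOf_monotone_comp (σ : Equiv.Perm (Fin k)) :
    MeasurableSet {s : Fin k → ℝ | Monotone (s ∘ σ)} :=
  (isClosed_monotone.preimage (f := fun s : Fin k → ℝ => s ∘ σ) (by fun_prop)).measurableSet

lemma MeasurableEquiv.piCongrLeft_perm_symm (σ : Equiv.Perm (Fin k)) :
    ⇑(MeasurableEquiv.piCongrLeft (fun _ : Fin k => ℝ) σ.symm) = fun s => s ∘ σ := by
  funext s i
  simp [MeasurableEquiv.piCongrLeft, Equiv.piCongrLeft]

variable {E : Type*} [NormedAddCommGroup E] [NormedSpace ℝ E]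

/-- Almost every tuple is injective, so exactly one permutation sorts it. -/
lemma sum_setIntegral_monotone_comp {F : (Fin k → ℝ) → E} (hF : Integrable F) :
    ∑ σ : Equiv.Perm (Fin k), ∫ s in {s | Monotone (s ∘ σ)}, F s = ∫ s, F s := by
  have hind : ∀ σ : Equiv.Perm (Fin k), Integrable ({s | Monotone (s ∘ σ)}.indicator F) :=
    fun σ => hF.indicator (measurableSet_setOf_monotone_comp σ)
  simp_rw [← integral_indicator (measurableSet_setOf_monotone_comp _)]
  rw [← integral_finsetSum _ fun σ _ => hind σ]
  refine integral_congr_ae ?_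
  filter_upwards [ae_injective_pi_real] with s hs
  rw [Finset.sum_eq_single (Tuple.sort s)]
  · exact indicator_of_mem (Tuple.monotone_sort s) F
  · exact fun σ _ hσ => indicator_of_notMem (fun h => hσ (Tuple.eq_sort_of_injective hs h)) F
  · exact fun h => absurd (Finset.mem_univ _) h

lemma setIntegral_monotone_comp_eq {F : (Fin k → ℝ) → E}
    (hF : ∀ s (σ : Equiv.Perm (Fin k)), F (s ∘ σ) = F s) (σ : Equiv.Perm (Fin k)) :
    ∫ s in {s | Monotone (s ∘ σ)}, F s = ∫ s in {s | Monotone s}, F s := by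
  have hσ := (volume_measurePreserving_piCongrLeft (fun _ : Fin k => ℝ) σ.symm)
    |>.setIntegral_preimage_emb (MeasurableEquiv.measurableEmbedding _) F {s | Monotone s}
  rw [MeasurableEquiv.piCongrLeft_perm_symm] at hσ
  simpa only [hF, preimage_ofPred_eq] using hσ

theorem factorial_mul_setIntegral_monotone_prod {𝕜 : Type*} [RCLike 𝕜] {g : ℝ → 𝕜}
    (hg : Integrable g) :
    (k ! : 𝕜) * ∫ s in {s : Fin k → ℝ | Monotone s}, ∏ i, g (s i) = (∫ x, g x) ^ k := by
  have hsymm : ∀ (s : Fin k → ℝ) (σ : Equiv.Perm (Fin k)), ∏ i, g (s (σ i)) = ∏ i, g (s i) :=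
    fun s σ => Equiv.prod_comp σ (fun i => g (s i))
  have hint : Integrable (fun s : Fin k → ℝ => ∏ i, g (s i)) := by
    simpa [volume_pi] using Integrable.fintype_prod (μ := fun _ : Fin k => volume) fun _ => hg
  calc (k ! : 𝕜) * ∫ s in {s : Fin k → ℝ | Monotone s}, ∏ i, g (s i)
      = ∑ σ : Equiv.Perm (Fin k), ∫ s in {s | Monotone (s ∘ σ)}, ∏ i, g (s i) := by
        simp [setIntegral_monotone_comp_eq (F := fun s => ∏ i, g (s i)) hsymm, Fintype.card_perm]
    _ = (∫ x, g x) ^ k := by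
        rw [sum_setIntegral_monotone_comp hint, volume_pi, integral_fintype_prod_eq_pow,
          Fintype.card_fin]

end SortedTuples

lemma integral_indicator_Icc_inv {a b : ℝ} (ha : 0 < a) (hab : a ≤ b) :
    ∫ x, (Icc a b).indicator (·⁻¹) x = log (b / a) := by
  rw [integral_indicator measurableSet_Icc, integral_Icc_eq_integral_Ioc,
    ← intervalIntegral.integral_of_le hab]
  exact integral_inv (notMem_uIcc_of_lt ha (ha.trans_le hab))

lemma prod_indicator_Icc_inv {k : ℕ} (a b : ℝ) :
    (fun s : Fin k → ℝ => ∏ i, (Icc a b).indicator (·⁻¹) (s i)) =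
      (univ.pi fun _ => Icc a b).indicator fun s => ∏ i, (s i)⁻¹ := by
  funext s
  by_cases hs : ∀ i, s i ∈ Icc a b
  · rw [indicator_of_mem (mem_univ_pi.2 hs)]
    exact Finset.prod_congr rfl fun i _ => indicator_of_mem (hs i) _
  · obtain ⟨i, hi⟩ := not_forall.1 hs
    rw [indicator_of_notMem fun h => hi (mem_univ_pi.1 h i)]
    exact Finset.prod_eq_zero (Finset.mem_univ i) (indicator_of_notMem hi _)

theorem setIntegral_prod_inv_le_of_subset {k : ℕ} {a b : ℝ} (ha : 0 < a) (hab : a ≤ b)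
    {R : Set (Fin k → ℝ)} (hR : R ⊆ {s | Monotone s} ∩ univ.pi fun _ => Icc a b) :
    ∫ s in R, ∏ i, (s i)⁻¹ ≤ log (b / a) ^ k / k ! := by
  set g : ℝ → ℝ := (Icc a b).indicator (·⁻¹)
  have hg : Integrable g := (integrable_indicator_iff measurableSet_Icc).2
    ((continuousOn_inv₀.mono fun x hx => (ha.trans_le hx.1).ne').integrableOn_Icc)
  have hbox : MeasurableSet (univ.pi fun _ : Fin k => Icc a b) :=
    MeasurableSet.univ_pi fun _ => measurableSet_Icc
  have hint : IntegrableOn (fun s : Fin k → ℝ => ∏ i, (s i)⁻¹) (univ.pi fun _ => Icc a b) := by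
    rw [← integrable_indicator_iff hbox, ← prod_indicator_Icc_inv]
    simpa [volume_pi] using Integrable.fintype_prod (μ := fun _ : Fin k => volume) fun _ => hg
  have hnonneg : 0 ≤ᵐ[volume.restrict ({s | Monotone s} ∩ univ.pi fun _ => Icc a b)]
      fun s : Fin k → ℝ => ∏ i, (s i)⁻¹ :=
    (ae_restrict_iff' ((measurableSet_setOf_monotone_comp 1).inter hbox)).2 <| .of_forall
      fun s hs => Finset.prod_nonneg fun i _ =>
        inv_nonneg.2 (ha.le.trans (hs.2 i (mem_univ i)).1)
  calc ∫ s in R, ∏ i, (s i)⁻¹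
      ≤ ∫ s in {s | Monotone s} ∩ univ.pi (fun _ => Icc a b), ∏ i, (s i)⁻¹ :=
        setIntegral_mono_set (hint.mono_set inter_subset_right) hnonneg hR.eventuallyLE
    _ = ∫ s in {s | Monotone s}, ∏ i, g (s i) := by
        rw [prod_indicator_Icc_inv, setIntegral_indicator hbox]
    _ = log (b / a) ^ k / k ! := by
        rw [eq_div_iff (by positivity), mul_comm, factorial_mul_setIntegral_monotone_prod hg,
          integral_indicator_Icc_inv ha hab]

lemma le_div_of_sum_add_mul_last_le {k : ℕ} (hk : 1 ≤ k) {A c δ : ℝ} (hc : 0 < c)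
    {s : Fin k → ℝ} (hδs : ∀ i, δ ≤ s i) (hs : Monotone s)
    (hsum : (∑ i ∈ Finset.univ.filter (fun i : Fin k => (i : ℕ) < k - 1), s i)
      + c * s ⟨k - 1, by omega⟩ ≤ A) (i : Fin k) :
    s i ≤ (A - (k - 1) * δ) / c := by
  set head := Finset.univ.filter (fun i : Fin k => (i : ℕ) < k - 1)
  have hcard : head.card = k - 1 := by
    rw [Fin.card_filter_val_lt]; omega
  have hhead : ((k : ℝ) - 1) * δ ≤ ∑ i ∈ head, s i := by
    have := Finset.card_nsmul_le_sum head s δ fun i _ => hδs i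
    rwa [hcard, nsmul_eq_mul, Nat.cast_sub hk, Nat.cast_one] at this
  calc s i ≤ s ⟨k - 1, by omega⟩ := hs (Fin.le_iff_val_le_val.2 (by grind))
    _ ≤ (A - (k - 1) * δ) / c := by rw [le_div_iff₀ hc]; linarith

/-- Let `δ ∈ (0,1)`, `h ≥ 3` with `hδ ≤ 3`, and `k = ⌊h/3⌋`.  With
`R(h,δ) = {s ∈ ℝ^k : δ ≤ s₁ ≤ ⋯ ≤ s_k, s₁ + ⋯ + s_{k−1} + (h−k+1)s_k ≤ 3}`,
one has `∫_{R(h,δ)} ds/(s₁⋯s_k) ≤ (1/k!)·(log((3−(k−1)δ)/((h−k+1)δ)))^k`. -/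
theorem integral_first_region_bound (δ : ℝ) (hδ0 : 0 < δ)
    (h : ℕ) (hh : 3 ≤ h) (hhδ : (h : ℝ) * δ ≤ 3) (k : ℕ) (hk : k = h / 3) :
    (∫ s : Fin k → ℝ in
        {s | (∀ i, δ ≤ s i) ∧ Monotone s ∧
          (∑ i ∈ Finset.univ.filter (fun i : Fin k => (i : ℕ) < k - 1), s i)
            + ((h : ℝ) - (k : ℝ) + 1) * s ⟨k - 1, by omega⟩ ≤ 3},
        ∏ i, (s i)⁻¹) ≤
      (1 / (k.factorial : ℝ)) *
        (Real.log ((3 - ((k : ℝ) - 1) * δ) / (((h : ℝ) - (k : ℝ) + 1) * δ))) ^ k := by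
  have hk1 : 1 ≤ k := by omega
  have hkh : (k : ℝ) ≤ h := by exact_mod_cast hk ▸ Nat.div_le_self h 3
  have hc : (0 : ℝ) < h - k + 1 := by linarith
  have hδM : δ ≤ (3 - (k - 1) * δ) / (h - k + 1) := by rw [le_div_iff₀ hc]; nlinarith
  rw [← div_div, one_div_mul_eq_div]
  exact setIntegral_prod_inv_le_of_subset hδ0 hδM fun s ⟨hδs, hs, hsum⟩ =>
    ⟨hs, fun i _ => ⟨hδs i, le_div_of_sum_add_mul_last_le hk1 hc hδs hs hsum i⟩⟩
end
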